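/- Ergodic convergence of AdaPBB: define w_k = α_k + E_kα_k² − E_{k+1}α_{k+1}² for k ≥ 1, S_k = E_1α_1² + Σ_{i=1}^k α_i, and x̄^k = (α_k(1 + E_kα_k)·x^k + Σ_{i=1}^{k−1} w_i·x^i)/S_k. Then for every k ≥ 1, F(x̄^k) − F_* ≤ U_1/(2S_k). -/

import Mathlib

open scoped RealInnerProductSpace
open Finset Filter

noncomputable section

/-- The AdaPBB iteration (Algorithm 3 of the paper) in its implicit form, for a composite
objective `F = f + g` where `f : ℝⁿ → ℝ` is convex and differentiable with gradient `f'`,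
and `g : ℝⁿ → ℝ` is convex.  `ξ k` is a subgradient of `g` at `x k`. -/
structure AdaPBB (n : ℕ) where
  f : EuclideanSpace ℝ (Fin n) → ℝ
  g : EuclideanSpace ℝ (Fin n) → ℝ
  f' : EuclideanSpace ℝ (Fin n) → EuclideanSpace ℝ (Fin n)
  x : ℕ → EuclideanSpace ℝ (Fin n)
  ξ : ℕ → EuclideanSpace ℝ (Fin n)
  α : ℕ → ℝ
  θ : ℕ → ℝ
  lam : ℕ → ℝ
  hfconv : ConvexOn ℝ Set.univ f
  hgconv : ConvexOn ℝ Set.univ g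
  hgrad : ∀ y, HasGradientAt f (f' y) y
  hmin : ∃ z, ∀ y, f z + g z ≤ f y + g y
  hα0 : 0 < α 0
  hθ0 : 0 ≤ θ 0
  hsub : ∀ k, ∀ y, g (x k) + ⟪ξ k, y - x k⟫ ≤ g y
  hstep : ∀ k, x (k + 1) = x k - α k • (f' (x k) + ξ (k + 1))
  hne : ∀ k, f' (x (k + 1)) ≠ f' (x k)
  hlam : ∀ k, lam (k + 1) =
    ⟪f' (x (k + 1)) - f' (x k), x (k + 1) - x k⟫ / ‖f' (x (k + 1)) - f' (x k)‖ ^ 2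
  hlampos : ∀ k, 0 < lam (k + 1)
  hcase1 : ∀ k, α k ≤ lam (k + 1) →
    α (k + 1) = Real.sqrt (1 + θ k) * α k ∧ θ (k + 1) = α (k + 1) / α k
  hcase2 : ∀ k, α k / 2 < lam (k + 1) → lam (k + 1) < α k →
    α (k + 1) = α k / Real.sqrt 2 ∧ θ (k + 1) = 0
  hcase3 : ∀ k, lam (k + 1) ≤ α k / 2 →
    α (k + 1) = lam (k + 1) / Real.sqrt 2 ∧ θ (k + 1) = 0

namespace AdaPBB

variable {n : ℕ}

/-- The composite objective `F = f + g`. -/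
def F (S : AdaPBB n) (y : EuclideanSpace ℝ (Fin n)) : ℝ := S.f y + S.g y

/-- `B_k` (for `k ≥ 1`), as in (5.13). -/
def B (S : AdaPBB n) (k : ℕ) : ℝ :=
  if S.α (k - 1) ≤ S.lam k then 0
  else if S.α (k - 1) / 2 < S.lam k then 1
  else (S.α (k - 1) - S.lam k) ^ 2 / S.lam k ^ 2

/-- `E_k` for `k ≥ 1`, as in (5.13). -/
def Eaux (S : AdaPBB n) (k : ℕ) : ℝ :=
  if S.α (k - 1) ≤ S.lam k then 1 / S.α (k - 1) else 0

/-- `E_k`, with the convention `E_0 = (E_1·α_1² - α_0)/α_0²`. -/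
def E (S : AdaPBB n) (k : ℕ) : ℝ :=
  if k = 0 then (S.Eaux 1 * S.α 1 ^ 2 - S.α 0) / S.α 0 ^ 2 else S.Eaux k

/-- The energy `V_k` (for `k ≥ 1`), relative to a minimizer `xs` of `F`. -/
def V (S : AdaPBB n) (xs : EuclideanSpace ℝ (Fin n)) (k : ℕ) : ℝ :=
  ‖S.x k - xs‖ ^ 2 + 2 * S.B k * S.α k ^ 2 * ‖S.f' (S.x (k - 1)) + S.ξ (k - 1)‖ ^ 2 +
    2 * S.α (k - 1) * (1 + S.E (k - 1) * S.α (k - 1)) * (S.F (S.x (k - 1)) - S.F xs)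

/-- The energy `U_k` (for `k ≥ 1`), relative to a minimizer `xs` of `F`. -/
def U (S : AdaPBB n) (xs : EuclideanSpace ℝ (Fin n)) (k : ℕ) : ℝ :=
  ‖S.x k - xs‖ ^ 2 + 2 * S.B k * S.α k ^ 2 * ‖S.f' (S.x (k - 1)) + S.ξ (k - 1)‖ ^ 2 +
    2 * S.E k * S.α k ^ 2 * (S.F (S.x (k - 1)) - S.F xs)

end AdaPBB

end

/-!
Up to the ergodic weights, the energy `U` decreases along the iteration:
`U_{k+1} + 2 w_k (F(x^k) - F_*) ≤ U_k` for `k ≥ 1`. This combines the proximal-gradient estimate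
`‖x^{k+1} - x*‖² + 2 α_k (F(x^k) - F_*) ≤ ‖x^k - x*‖² + α_k² ‖∇f(x^k) + ξ^k‖²`, the bound
`2 B_{k+1} α_{k+1}² ≤ α_k²`, and
`‖∇f(x^k) + ξ^k‖² + E_k (F(x^k) - F(x^{k-1})) ≤ B_k ‖∇f(x^{k-1}) + ξ^{k-1}‖²`, which is where
`λ_k` and the three step-size rules enter. Telescoping, together with
`U_{k+1} ≥ 2 E_{k+1} α_{k+1}² (F(x^k) - F_*)`, bounds the weighted sum of the `F(x^i) - F_*` by
`U_1 / 2`, the weights of `x̄^k` being nonnegative with sum `S_k`; Jensen's inequality for `F`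
at `x̄^k` concludes.
-/

theorem ConvexOn.add_inner_sub_le_of_hasGradientAt {E : Type*} [NormedAddCommGroup E]
    [InnerProductSpace ℝ E] [CompleteSpace E] {f : E → ℝ} (hf : ConvexOn ℝ Set.univ f)
    {x y g : E} (hg : HasGradientAt f g x) : f x + ⟪g, y - x⟫ ≤ f y := by
  have hline : ConvexOn ℝ Set.univ (f ∘ AffineMap.lineMap (k := ℝ) x y) := hf.comp_affineMap _
  have hderiv : HasDerivAt (f ∘ AffineMap.lineMap (k := ℝ) x y) ⟪g, y - x⟫ 0 := by
    rw [← AffineMap.lineMap_apply_zero x y (k := ℝ)] at hg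
    simpa using hg.hasFDerivAt.comp_hasDerivAt 0 AffineMap.hasDerivAt_lineMap
  have := hline.le_slope_of_hasDerivAt (Set.mem_univ 0) (Set.mem_univ 1) zero_lt_one hderiv
  simp only [slope, sub_zero, inv_one, Function.comp_apply, AffineMap.lineMap_apply_one,
    AffineMap.lineMap_apply_zero, vsub_eq_sub, smul_eq_mul, one_mul] at this
  linarith

theorem ConvexOn.map_centerMass_sub_le {ι E : Type*} [AddCommGroup E] [Module ℝ E]
    {s : Set E} {f : E → ℝ} (hf : ConvexOn ℝ s f) {t : Finset ι} {w : ι → ℝ} {p : ι → E}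
    (hw : ∀ i ∈ t, 0 ≤ w i) (hpos : 0 < ∑ i ∈ t, w i) (hp : ∀ i ∈ t, p i ∈ s) (c : ℝ) :
    f (t.centerMass w p) - c ≤ (∑ i ∈ t, w i * (f (p i) - c)) / ∑ i ∈ t, w i := by
  have h : f (t.centerMass w p) ≤ (∑ i ∈ t, w i)⁻¹ * ∑ i ∈ t, w i * f (p i) :=
    hf.map_centerMass_le hw hpos hp
  rw [le_div_iff₀ hpos]
  simp only [mul_sub, Finset.sum_sub_distrib, ← Finset.sum_mul]
  nlinarith [(le_inv_mul_iff₀ hpos).mp h]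

theorem norm_le_of_norm_sq_le_inner {E : Type*} [NormedAddCommGroup E] [InnerProductSpace ℝ E]
    {a b : E} (h : ‖a‖ ^ 2 ≤ ⟪b, a⟫) : ‖a‖ ≤ ‖b‖ := by
  nlinarith [real_inner_le_norm b a, norm_nonneg a, norm_nonneg b]

namespace AdaPBB

variable {n : ℕ} (S : AdaPBB n)

/-- `∇f(x^k) + ξ^k ∈ ∂F(x^k)`. -/
def subgrad (k : ℕ) : EuclideanSpace ℝ (Fin n) := S.f' (S.x k) + S.ξ k

def dir (k : ℕ) : EuclideanSpace ℝ (Fin n) := S.f' (S.x k) + S.ξ (k + 1)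

def gradDiff (k : ℕ) : EuclideanSpace ℝ (Fin n) := S.f' (S.x (k + 1)) - S.f' (S.x k)

noncomputable def w (k : ℕ) : ℝ := S.α k + S.E k * S.α k ^ 2 - S.E (k + 1) * S.α (k + 1) ^ 2

lemma x_succ (k : ℕ) : S.x (k + 1) = S.x k - S.α k • S.dir k := S.hstep k

lemma subgrad_succ (k : ℕ) : S.subgrad (k + 1) = S.dir k + S.gradDiff k := by
  simp only [subgrad, dir, gradDiff]; abel

lemma subgrad_eq_dir_sub (k : ℕ) : S.subgrad k = S.dir k - (S.ξ (k + 1) - S.ξ k) := by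
  simp only [subgrad, dir]; abel

lemma F_add_inner_le (k : ℕ) (y : EuclideanSpace ℝ (Fin n)) :
    S.F (S.x k) + ⟪S.subgrad k, y - S.x k⟫ ≤ S.F y := by
  have hf := S.hfconv.add_inner_sub_le_of_hasGradientAt (y := y) (S.hgrad (S.x k))
  have hg := S.hsub k y
  rw [subgrad, inner_add_left]
  simp only [F]
  linarith

lemma α_pos_and_θ_nonneg (k : ℕ) : 0 < S.α k ∧ 0 ≤ S.θ k := by
  induction k with
  | zero => exact ⟨S.hα0, S.hθ0⟩
  | succ k ih =>
    rcases le_or_gt (S.α k) (S.lam (k + 1)) with h1 | h1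
    · obtain ⟨hα, hθ⟩ := S.hcase1 k h1
      have hα' : 0 < S.α (k + 1) := by
        rw [hα]; exact mul_pos (Real.sqrt_pos.mpr (by linarith)) ih.1
      exact ⟨hα', by rw [hθ]; exact div_nonneg hα'.le ih.1.le⟩
    rcases le_or_gt (S.lam (k + 1)) (S.α k / 2) with h3 | h2
    · obtain ⟨hα, hθ⟩ := S.hcase3 k h3
      exact ⟨by rw [hα]; exact div_pos (S.hlampos k) (by positivity), hθ.ge⟩
    · obtain ⟨hα, hθ⟩ := S.hcase2 k h2 h1
      exact ⟨by rw [hα]; exact div_pos ih.1 (by positivity), hθ.ge⟩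

lemma α_pos (k : ℕ) : 0 < S.α k := (S.α_pos_and_θ_nonneg k).1

lemma θ_nonneg (k : ℕ) : 0 ≤ S.θ k := (S.α_pos_and_θ_nonneg k).2

section Cases

variable {S} {k : ℕ}

lemma B_succ_of_le (h : S.α k ≤ S.lam (k + 1)) : S.B (k + 1) = 0 := by
  simp [B, h]

lemma B_succ_of_mid (h₁ : S.α k / 2 < S.lam (k + 1)) (h₂ : S.lam (k + 1) < S.α k) :
    S.B (k + 1) = 1 := by
  simp [B, h₁, not_le.mpr h₂]

lemma B_succ_of_le_half (h : S.lam (k + 1) ≤ S.α k / 2) :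
    S.B (k + 1) = (S.α k - S.lam (k + 1)) ^ 2 / S.lam (k + 1) ^ 2 := by
  have hlt : S.lam (k + 1) < S.α k := by linarith [S.α_pos k]
  simp [B, not_le.mpr hlt, not_lt.mpr h]

lemma E_succ_of_le (h : S.α k ≤ S.lam (k + 1)) : S.E (k + 1) = 1 / S.α k := by
  simp [E, Eaux, h]

lemma E_succ_of_lt (h : S.lam (k + 1) < S.α k) : S.E (k + 1) = 0 := by
  simp [E, Eaux, not_le.mpr h]

end Cases

lemma E_succ_nonneg (k : ℕ) : 0 ≤ S.E (k + 1) := by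
  rcases le_or_gt (S.α k) (S.lam (k + 1)) with h | h
  · rw [E_succ_of_le h]; exact (one_div_pos.mpr (S.α_pos k)).le
  · rw [E_succ_of_lt h]

lemma B_succ_nonneg (k : ℕ) : 0 ≤ S.B (k + 1) := by
  simp only [B, Nat.add_sub_cancel]; split_ifs <;> positivity

lemma E_succ_mul_sq (k : ℕ) : S.E (k + 1) * S.α (k + 1) ^ 2 = S.θ (k + 1) * S.α (k + 1) := by
  rcases le_or_gt (S.α k) (S.lam (k + 1)) with h | h
  · rw [E_succ_of_le h, (S.hcase1 k h).2]
    have := S.α_pos k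
    field_simp
  · have hθ : S.θ (k + 1) = 0 := by
      rcases le_or_gt (S.lam (k + 1)) (S.α k / 2) with h3 | h2
      · exact (S.hcase3 k h3).2
      · exact (S.hcase2 k h2 h).2
    rw [E_succ_of_lt h, hθ, zero_mul, zero_mul]

lemma w_succ_nonneg (k : ℕ) : 0 ≤ S.w (k + 1) := by
  have hα := S.α_pos (k + 1)
  have hθ := S.θ_nonneg (k + 1)
  rw [w, S.E_succ_mul_sq k]
  rcases le_or_gt (S.α (k + 1)) (S.lam (k + 2)) with h | h
  · have hsq : S.α (k + 2) ^ 2 = (1 + S.θ (k + 1)) * S.α (k + 1) ^ 2 := by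
      rw [(S.hcase1 (k + 1) h).1, mul_pow, Real.sq_sqrt (by linarith)]
    have hcancel : 1 / S.α (k + 1) * ((1 + S.θ (k + 1)) * S.α (k + 1) ^ 2) =
        S.α (k + 1) + S.θ (k + 1) * S.α (k + 1) := by
      field_simp
    rw [E_succ_of_le h, hsq, hcancel, sub_self]
  · rw [E_succ_of_lt h]
    nlinarith

lemma two_mul_B_succ_mul_sq_le (k : ℕ) : 2 * S.B (k + 1) * S.α (k + 1) ^ 2 ≤ S.α k ^ 2 := by
  have hsqrt2 : Real.sqrt 2 ^ 2 = 2 := Real.sq_sqrt (by norm_num)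
  have hlam := S.hlampos k
  rcases le_or_gt (S.α k) (S.lam (k + 1)) with h1 | h1
  · rw [B_succ_of_le h1, mul_zero, zero_mul]; positivity
  rcases le_or_gt (S.lam (k + 1)) (S.α k / 2) with h3 | h2
  · rw [B_succ_of_le_half h3, (S.hcase3 k h3).1, div_pow, hsqrt2]
    field_simp
    nlinarith
  · rw [B_succ_of_mid h2 h1, (S.hcase2 k h2 h1).1, div_pow, hsqrt2]
    linarith

lemma norm_gradDiff_pos (k : ℕ) : 0 < ‖S.gradDiff k‖ :=
  norm_pos_iff.mpr (sub_ne_zero.mpr (S.hne k))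

lemma inner_gradDiff_dir (k : ℕ) :
    S.α k * ⟪S.gradDiff k, S.dir k⟫ = -(S.lam (k + 1) * ‖S.gradDiff k‖ ^ 2) := by
  have hΔ : ‖S.gradDiff k‖ ^ 2 ≠ 0 := (pow_pos (S.norm_gradDiff_pos k) 2).ne'
  have h : ⟪S.gradDiff k, S.x (k + 1) - S.x k⟫ = S.lam (k + 1) * ‖S.gradDiff k‖ ^ 2 := by
    simp only [gradDiff] at hΔ ⊢
    rw [S.hlam k, div_mul_cancel₀ _ hΔ]
  rw [S.x_succ k, sub_sub_cancel_left, inner_neg_right, real_inner_smul_right] at h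
  linarith

lemma lam_mul_norm_gradDiff_le (k : ℕ) :
    S.lam (k + 1) * ‖S.gradDiff k‖ ≤ S.α k * ‖S.dir k‖ := by
  have hΔ := S.norm_gradDiff_pos k
  have hcs := real_inner_le_norm (-S.gradDiff k) (S.dir k)
  rw [inner_neg_left, norm_neg] at hcs
  nlinarith [S.inner_gradDiff_dir k, S.α_pos k]

lemma mul_norm_subgrad_succ_sq_eq (k : ℕ) :
    S.α k * ‖S.subgrad (k + 1)‖ ^ 2 =
      S.α k * ‖S.dir k‖ ^ 2 + (S.α k - 2 * S.lam (k + 1)) * ‖S.gradDiff k‖ ^ 2 := by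
  rw [S.subgrad_succ, norm_add_sq_real, real_inner_comm]
  linear_combination 2 * S.inner_gradDiff_dir k

/-- A consequence of the monotonicity of `∂g`. -/
lemma norm_dir_le (k : ℕ) : ‖S.dir k‖ ≤ ‖S.subgrad k‖ := by
  have h₁ := S.hsub k (S.x (k + 1))
  have h₂ := S.hsub (k + 1) (S.x k)
  rw [S.x_succ k] at h₁ h₂
  simp only [sub_sub_cancel_left, sub_sub_cancel, inner_neg_right, real_inner_smul_right] at h₁ h₂
  apply norm_le_of_norm_sq_le_inner
  rw [S.subgrad_eq_dir_sub, inner_sub_left, real_inner_self_eq_norm_sq, inner_sub_left]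
  nlinarith [S.α_pos k]

lemma mul_norm_subgrad_succ_sq_add_F_sub_le (k : ℕ) :
    S.α k * ‖S.subgrad (k + 1)‖ ^ 2 + (S.F (S.x (k + 1)) - S.F (S.x k)) ≤
      (S.α k - S.lam (k + 1)) * ‖S.gradDiff k‖ ^ 2 := by
  have h := S.F_add_inner_le (k + 1) (S.x k)
  have hx : S.x k - S.x (k + 1) = S.α k • S.dir k := by rw [S.x_succ k, sub_sub_cancel]
  rw [hx, real_inner_smul_right, S.subgrad_succ, inner_add_left,
    real_inner_self_eq_norm_sq] at h
  rw [S.subgrad_succ, norm_add_sq_real, real_inner_comm]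
  nlinarith [S.inner_gradDiff_dir k]

lemma norm_subgrad_succ_sq_add_E_mul_le (k : ℕ) :
    ‖S.subgrad (k + 1)‖ ^ 2 + S.E (k + 1) * (S.F (S.x (k + 1)) - S.F (S.x k)) ≤
      S.B (k + 1) * ‖S.subgrad k‖ ^ 2 := by
  have hα := S.α_pos k
  have hlam := S.hlampos k
  have hsq := S.mul_norm_subgrad_succ_sq_eq k
  have hdir : ‖S.dir k‖ ^ 2 ≤ ‖S.subgrad k‖ ^ 2 :=
    pow_le_pow_left₀ (norm_nonneg _) (S.norm_dir_le k) 2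
  rcases le_or_gt (S.α k) (S.lam (k + 1)) with h1 | h1
  · have h := S.mul_norm_subgrad_succ_sq_add_F_sub_le k
    rw [B_succ_of_le h1, E_succ_of_le h1, zero_mul, ← mul_le_mul_iff_right₀ hα]
    field_simp
    nlinarith [sq_nonneg ‖S.gradDiff k‖]
  rw [E_succ_of_lt h1, zero_mul, add_zero]
  rcases le_or_gt (S.lam (k + 1)) (S.α k / 2) with h3 | h2
  · have hΔ := S.lam_mul_norm_gradDiff_le k
    have hΔsq : (S.lam (k + 1) * ‖S.gradDiff k‖) ^ 2 ≤ (S.α k * ‖S.dir k‖) ^ 2 :=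
      pow_le_pow_left₀ (by positivity) hΔ 2
    -- `α λ² ‖P‖² = α λ² ‖Q‖² + (α - 2λ) λ² ‖Δ‖² ≤ α (α - λ)² ‖Q‖²`, with `P = subgrad (k + 1)`,
    -- `Q = dir k`, `Δ = gradDiff k`
    rw [B_succ_of_le_half h3, div_mul_eq_mul_div, le_div_iff₀ (by positivity),
      ← mul_le_mul_iff_right₀ hα]
    nlinarith [mul_le_mul_of_nonneg_left hΔsq (by linarith : 0 ≤ S.α k - 2 * S.lam (k + 1)),
      mul_le_mul_of_nonneg_left hdir (by positivity : 0 ≤ S.α k * (S.α k - S.lam (k + 1)) ^ 2)]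
  · rw [B_succ_of_mid h2 h1, one_mul]
    nlinarith [sq_nonneg ‖S.gradDiff k‖]

lemma norm_x_succ_sub_sq_add_le (xs : EuclideanSpace ℝ (Fin n)) (k : ℕ) :
    ‖S.x (k + 1) - xs‖ ^ 2 + 2 * S.α k * (S.F (S.x k) - S.F xs) ≤
      ‖S.x k - xs‖ ^ 2 + S.α k ^ 2 * ‖S.subgrad k‖ ^ 2 := by
  set δ := S.ξ (k + 1) - S.ξ k with hδ
  have hlow : S.F (S.x k) - S.F xs + S.α k * ⟪δ, S.dir k⟫ ≤ ⟪S.dir k, S.x k - xs⟫ := by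
    have hf := S.hfconv.add_inner_sub_le_of_hasGradientAt (y := xs) (S.hgrad (S.x k))
    have hg₁ := S.hsub (k + 1) xs
    have hg₂ := S.hsub k (S.x (k + 1))
    rw [S.x_succ k] at hg₁ hg₂
    simp only [hδ, F, dir, sub_sub_cancel_left, inner_neg_right, real_inner_smul_right,
      inner_sub_right, inner_sub_left, inner_add_left, inner_add_right] at hf hg₁ hg₂ ⊢
    linarith
  calc ‖S.x (k + 1) - xs‖ ^ 2 + 2 * S.α k * (S.F (S.x k) - S.F xs)
      = ‖S.x k - xs‖ ^ 2 - 2 * S.α k * ⟪S.dir k, S.x k - xs⟫ + S.α k ^ 2 * ‖S.dir k‖ ^ 2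
          + 2 * S.α k * (S.F (S.x k) - S.F xs) := by
        rw [S.x_succ k, sub_right_comm, norm_sub_sq_real, real_inner_smul_right, norm_smul,
          mul_pow, Real.norm_eq_abs, sq_abs, real_inner_comm]
        ring
    _ ≤ ‖S.x k - xs‖ ^ 2 + S.α k ^ 2 * (‖S.dir k‖ ^ 2 - 2 * ⟪S.dir k, δ⟫ + ‖δ‖ ^ 2) := by
        have hcomm : ⟪S.dir k, δ⟫ = ⟪δ, S.dir k⟫ := real_inner_comm _ _
        nlinarith [mul_le_mul_of_nonneg_left hlow (by linarith [S.α_pos k] : 0 ≤ 2 * S.α k),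
          sq_nonneg (S.α k * ‖δ‖)]
    _ = ‖S.x k - xs‖ ^ 2 + S.α k ^ 2 * ‖S.subgrad k‖ ^ 2 := by
        rw [S.subgrad_eq_dir_sub, norm_sub_sq_real (S.dir k)]

lemma U_succ (xs : EuclideanSpace ℝ (Fin n)) (k : ℕ) :
    S.U xs (k + 1) = ‖S.x (k + 1) - xs‖ ^ 2 + 2 * S.B (k + 1) * S.α (k + 1) ^ 2 *
      ‖S.subgrad k‖ ^ 2 + 2 * S.E (k + 1) * S.α (k + 1) ^ 2 * (S.F (S.x k) - S.F xs) := rfl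

lemma U_succ_succ_add_le (xs : EuclideanSpace ℝ (Fin n)) (k : ℕ) :
    S.U xs (k + 2) + 2 * S.w (k + 1) * (S.F (S.x (k + 1)) - S.F xs) ≤ S.U xs (k + 1) := by
  have hdist := S.norm_x_succ_sub_sq_add_le xs (k + 1)
  have hsubgrad := mul_le_mul_of_nonneg_left (S.norm_subgrad_succ_sq_add_E_mul_le k)
    (by positivity : 0 ≤ 2 * S.α (k + 1) ^ 2)
  have hB := mul_le_mul_of_nonneg_right (S.two_mul_B_succ_mul_sq_le (k + 1))
    (sq_nonneg ‖S.subgrad (k + 1)‖)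
  rw [S.U_succ xs (k + 1), S.U_succ xs k, w]
  linarith

lemma U_succ_add_sum_le (xs : EuclideanSpace ℝ (Fin n)) (k : ℕ) :
    S.U xs (k + 1) + 2 * ∑ j ∈ Icc 1 k, S.w j * (S.F (S.x j) - S.F xs) ≤ S.U xs 1 := by
  induction k with
  | zero => simp
  | succ k ih =>
    rw [sum_Icc_succ_top (by omega), mul_add]
    linarith [S.U_succ_succ_add_le xs k]

lemma sum_w (k : ℕ) :
    ∑ j ∈ Icc 1 k, S.w j =
      ∑ j ∈ Icc 1 k, S.α j + S.E 1 * S.α 1 ^ 2 - S.E (k + 1) * S.α (k + 1) ^ 2 := by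
  induction k with
  | zero => simp
  | succ k ih =>
    rw [sum_Icc_succ_top (by omega), sum_Icc_succ_top (by omega) (f := S.α), ih, w]
    ring

noncomputable def ergodicWeight (k i : ℕ) : ℝ :=
  if i = k then S.α k * (1 + S.E k * S.α k) else S.w i

lemma sum_ergodicWeight_smul {M : Type*} [AddCommMonoid M] [Module ℝ M] (k : ℕ) (v : ℕ → M) :
    ∑ i ∈ Icc 1 (k + 1), S.ergodicWeight (k + 1) i • v i =
      (S.α (k + 1) * (1 + S.E (k + 1) * S.α (k + 1))) • v (k + 1) +
        ∑ i ∈ Icc 1 k, S.w i • v i := by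
  rw [sum_Icc_succ_top (by omega), add_comm]
  congr 1
  · simp [ergodicWeight]
  · refine sum_congr rfl fun i hi => ?_
    have : i ≠ k + 1 := by have := (mem_Icc.mp hi).2; omega
    simp [ergodicWeight, this]

lemma sum_ergodicWeight (k : ℕ) :
    ∑ i ∈ Icc 1 (k + 1), S.ergodicWeight (k + 1) i =
      S.E 1 * S.α 1 ^ 2 + ∑ i ∈ Icc 1 (k + 1), S.α i := by
  have h := S.sum_ergodicWeight_smul k (fun _ => (1 : ℝ))
  simp only [smul_eq_mul, mul_one] at h
  rw [h, S.sum_w, sum_Icc_succ_top (by omega) (f := S.α)]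
  ring

lemma sum_ergodicWeight_pos (k : ℕ) : 0 < ∑ i ∈ Icc 1 (k + 1), S.ergodicWeight (k + 1) i := by
  rw [sum_ergodicWeight]
  have := S.E_succ_nonneg 0
  have := sum_pos (fun i _ => S.α_pos i) (nonempty_Icc.mpr (by omega : 1 ≤ k + 1))
  positivity

lemma ergodicWeight_nonneg (k i : ℕ) (hi : i ∈ Icc 1 (k + 1)) :
    0 ≤ S.ergodicWeight (k + 1) i := by
  obtain ⟨j, rfl⟩ : ∃ j, i = j + 1 := ⟨i - 1, by have := (mem_Icc.mp hi).1; omega⟩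
  unfold ergodicWeight
  split_ifs
  · have := S.E_succ_nonneg k
    have := S.α_pos (k + 1)
    positivity
  · exact S.w_succ_nonneg j

lemma sum_ergodicWeight_mul_le (xs : EuclideanSpace ℝ (Fin n)) (k : ℕ) :
    ∑ i ∈ Icc 1 (k + 1), S.ergodicWeight (k + 1) i * (S.F (S.x i) - S.F xs) ≤ S.U xs 1 / 2 := by
  have htel := S.U_succ_add_sum_le xs (k + 1)
  have hU : 2 * S.E (k + 2) * S.α (k + 2) ^ 2 * (S.F (S.x (k + 1)) - S.F xs) ≤
      S.U xs (k + 2) := by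
    have := S.B_succ_nonneg (k + 1)
    rw [S.U_succ xs (k + 1)]
    nlinarith [sq_nonneg ‖S.x (k + 2) - xs‖,
      mul_nonneg (mul_nonneg this (sq_nonneg (S.α (k + 2)))) (sq_nonneg ‖S.subgrad (k + 1)‖)]
  have h := S.sum_ergodicWeight_smul k (fun i => S.F (S.x i) - S.F xs)
  simp only [smul_eq_mul] at h
  rw [sum_Icc_succ_top (by omega), w] at htel
  rw [h]
  nlinarith

end AdaPBB

theorem adapbb_ergodic_convergence_general (n : ℕ) (S : AdaPBB n)
    (xs : EuclideanSpace ℝ (Fin n))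
    (k : ℕ) (hk : 1 ≤ k) :
    S.F ((S.E 1 * S.α 1 ^ 2 + ∑ i ∈ Finset.Icc 1 k, S.α i)⁻¹ •
        ((S.α k * (1 + S.E k * S.α k)) • S.x k +
          ∑ i ∈ Finset.Icc 1 (k - 1),
            (S.α i + S.E i * S.α i ^ 2 - S.E (i + 1) * S.α (i + 1) ^ 2) • S.x i)) - S.F xs ≤
      S.U xs 1 / (2 * (S.E 1 * S.α 1 ^ 2 + ∑ i ∈ Finset.Icc 1 k, S.α i)) := by
  obtain ⟨k, rfl⟩ : ∃ m, k = m + 1 := ⟨k - 1, by omega⟩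
  have hsum := S.sum_ergodicWeight k
  have hpoint : (S.E 1 * S.α 1 ^ 2 + ∑ i ∈ Finset.Icc 1 (k + 1), S.α i)⁻¹ •
      ((S.α (k + 1) * (1 + S.E (k + 1) * S.α (k + 1))) • S.x (k + 1) +
        ∑ i ∈ Finset.Icc 1 (k + 1 - 1), S.w i • S.x i) =
      (Finset.Icc 1 (k + 1)).centerMass (S.ergodicWeight (k + 1)) S.x := by
    rw [Finset.centerMass, hsum, S.sum_ergodicWeight_smul, Nat.add_sub_cancel]
  have hF : ConvexOn ℝ Set.univ S.F := S.hfconv.add S.hgconv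
  calc _ ≤ (∑ i ∈ Finset.Icc 1 (k + 1), S.ergodicWeight (k + 1) i * (S.F (S.x i) - S.F xs)) /
        ∑ i ∈ Finset.Icc 1 (k + 1), S.ergodicWeight (k + 1) i :=
        hpoint ▸ hF.map_centerMass_sub_le (S.ergodicWeight_nonneg k) (S.sum_ergodicWeight_pos k)
          (fun _ _ => Set.mem_univ _) _
    _ ≤ S.U xs 1 / 2 / ∑ i ∈ Finset.Icc 1 (k + 1), S.ergodicWeight (k + 1) i :=
        div_le_div_of_nonneg_right (S.sum_ergodicWeight_mul_le xs k)
          (S.sum_ergodicWeight_pos k).le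
    _ = _ := by rw [hsum, div_div]

/-- Theorem 5.12 (ergodic convergence of AdaPBB): with `w_k = α_k + E_kα_k² - E_{k+1}α_{k+1}²`,
`S_k = E_1α_1² + Σ_{i=1}^k α_i` and
`x̄^k = (α_k(1 + E_kα_k)·x^k + Σ_{i=1}^{k-1} w_i·x^i)/S_k`, one has
`F(x̄^k) - F_* ≤ U_1/(2·S_k)` for every `k ≥ 1`. -/
theorem adapbb_ergodic_convergence (n : ℕ) (S : AdaPBB n)
    (xs : EuclideanSpace ℝ (Fin n)) (hxs : ∀ y, S.F xs ≤ S.F y)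
    (k : ℕ) (hk : 1 ≤ k) :
    S.F ((S.E 1 * S.α 1 ^ 2 + ∑ i ∈ Finset.Icc 1 k, S.α i)⁻¹ •
        ((S.α k * (1 + S.E k * S.α k)) • S.x k +
          ∑ i ∈ Finset.Icc 1 (k - 1),
            (S.α i + S.E i * S.α i ^ 2 - S.E (i + 1) * S.α (i + 1) ^ 2) • S.x i)) - S.F xs ≤
      S.U xs 1 / (2 * (S.E 1 * S.α 1 ^ 2 + ∑ i ∈ Finset.Icc 1 k, S.α i)) :=
  adapbb_ergodic_convergence_general n S xs k hk
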